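/- Let T be a contractive m-quasi-isometry for some integer m ≥ 3 satisfying |T| ≤ |Re T|. Then N(I - T*T) = N(I - TT*) = closure(R(T^m)), this subspace reduces T to a symmetry, and T = S ⊕ Q with S a symmetry and Q^m = 0. -/

import Mathlib

open ContinuousLinearMap

/-- The modulus `|T| = (T*T)^{1/2}` of an operator. -/
noncomputable def absOp {H : Type*} [NormedAddCommGroup H] [InnerProductSpace ℂ H]
    [CompleteSpace H] (T : H →L[ℂ] H) : H →L[ℂ] H :=
  CFC.sqrt (adjoint T * T)

/-- The real part `Re T = (T + T*)/2` of an operator. -/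
noncomputable def reOp {H : Type*} [NormedAddCommGroup H] [InnerProductSpace ℂ H]
    [CompleteSpace H] (T : H →L[ℂ] H) : H →L[ℂ] H :=
  (2 : ℂ)⁻¹ • (T + adjoint T)

/-- `|Re T| = ((Re T)^2)^{1/2}`. -/
noncomputable def absRe {H : Type*} [NormedAddCommGroup H] [InnerProductSpace ℂ H]
    [CompleteSpace H] (T : H →L[ℂ] H) : H →L[ℂ] H :=
  CFC.sqrt (reOp T ^ 2)

/-!
On `K = N(I - T*T)` the modulus `|T|` fixes every vector, so `|T| ≤ |Re T|` gives
`re ⟪|Re T| x, x⟫ ≥ ‖x‖²`; since `‖|Re T| x‖ = ‖Re T x‖ ≤ ‖x‖`, this forces `|Re T| x = x`, i.e.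
`‖Tx + T*x‖ = 2‖x‖`. As `‖Tx‖, ‖T*x‖ ≤ ‖x‖`, the parallelogram law gives `T*x = Tx`, and then
`TT*x = x`. Hence `K` reduces `T` and `T² = I` on `K`. The quasi-isometry condition puts
`R(T^m)` inside `K`, while `T^{2m} = I` on `K` gives the reverse inclusion; finally `T^m` maps
`Kᗮ` into `K ∩ Kᗮ = 0`.
-/

lemma eq_of_norm_le_of_norm_add_eq (𝕜 : Type*) {E : Type*} [RCLike 𝕜] [NormedAddCommGroup E]
    [InnerProductSpace 𝕜 E] {u v : E} {r : ℝ} (hu : ‖u‖ ≤ r) (hv : ‖v‖ ≤ r)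
    (h : ‖u + v‖ = 2 * r) : u = v := by
  have hpar := parallelogram_law_with_norm 𝕜 u v
  rw [← sub_eq_zero, ← norm_eq_zero]
  nlinarith [norm_nonneg u, norm_nonneg v, norm_nonneg (u - v)]

section InnerProductSpace

variable {𝕜 E F : Type*} [RCLike 𝕜] [NormedAddCommGroup E] [InnerProductSpace 𝕜 E]
  [NormedAddCommGroup F] [InnerProductSpace 𝕜 F]

lemma eq_of_norm_le_of_sq_norm_le_re_inner {x y : E} (hy : ‖y‖ ≤ ‖x‖)
    (h : ‖x‖ ^ 2 ≤ RCLike.re (inner 𝕜 y x)) : y = x := by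
  have hsq : ‖y - x‖ ^ 2 ≤ 0 := by
    rw [norm_sub_sq (𝕜 := 𝕜)]
    nlinarith [norm_nonneg y]
  rw [← sub_eq_zero, ← norm_eq_zero]
  nlinarith [norm_nonneg (y - x)]

lemma mem_ker_one_sub_iff (A : E →L[𝕜] E) (x : E) :
    x ∈ LinearMap.ker ((1 - A : E →L[𝕜] E) : E →ₗ[𝕜] E) ↔ A x = x := by
  simp [sub_eq_zero, eq_comm (a := x)]

namespace ContinuousLinearMap

lemma norm_apply_le_of_norm_le_one {T : E →L[𝕜] F} (hT : ‖T‖ ≤ 1) (x : E) : ‖T x‖ ≤ ‖x‖ :=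
  (T.le_of_opNorm_le hT x).trans_eq (one_mul _)

lemma IsPositive.apply_eq_of_apply_apply_eq {P : E →L[𝕜] E} (hP : P.IsPositive) {x : E}
    (hx : P (P x) = x) : P x = x := by
  -- `y = P x - x` satisfies `P y = -y`, which positivity allows only for `y = 0`.
  have hy : P (P x - x) = -(P x - x) := by rw [map_sub, hx, neg_sub]
  have h := hP.re_inner_nonneg_left (P x - x)
  rw [hy, inner_neg_left, map_neg, inner_self_eq_norm_sq (𝕜 := 𝕜)] at h
  rw [← sub_eq_zero, ← norm_eq_zero]
  nlinarith [norm_nonneg (P x - x)]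

variable [CompleteSpace E] [CompleteSpace F]

lemma norm_apply_eq_of_adjoint_apply_apply_eq (T : E →L[𝕜] F) {x : E}
    (hx : adjoint T (T x) = x) : ‖T x‖ = ‖x‖ := by
  have h := T.apply_norm_sq_eq_inner_adjoint_left x
  rw [comp_apply, hx, inner_self_eq_norm_sq (𝕜 := 𝕜)] at h
  exact (pow_left_inj₀ (norm_nonneg _) (norm_nonneg _) two_ne_zero).mp h

lemma adjoint_apply_apply_eq_of_norm_apply_eq {T : E →L[𝕜] F} (hT : ‖T‖ ≤ 1) {x : E}
    (hx : ‖T x‖ = ‖x‖) : adjoint T (T x) = x := by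
  refine eq_of_norm_le_of_sq_norm_le_re_inner (𝕜 := 𝕜) ?_ ?_
  · exact hx ▸ norm_apply_le_of_norm_le_one (by simpa using hT) _
  · have h := T.apply_norm_sq_eq_inner_adjoint_left x
    rw [comp_apply, hx] at h
    exact h.le

lemma norm_apply_eq_of_adjoint_comp_self_eq {S P : E →L[𝕜] F}
    (h : adjoint S ∘L S = adjoint P ∘L P) (x : E) : ‖S x‖ = ‖P x‖ := by
  have hsq := S.apply_norm_sq_eq_inner_adjoint_left x
  rw [h, ← P.apply_norm_sq_eq_inner_adjoint_left] at hsq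
  exact (pow_left_inj₀ (norm_nonneg _) (norm_nonneg _) two_ne_zero).mp hsq

end ContinuousLinearMap

end InnerProductSpace

section AbsReDomination

variable {H : Type*} [NormedAddCommGroup H] [InnerProductSpace ℂ H] [CompleteSpace H]
  {T : H →L[ℂ] H}

lemma isSelfAdjoint_reOp (T : H →L[ℂ] H) : IsSelfAdjoint (reOp T) := by
  rw [reOp, IsSelfAdjoint, star_smul, star_add, star_eq_adjoint, star_eq_adjoint, adjoint_adjoint,
    add_comm]
  simp

lemma two_mul_norm_reOp_apply (T : H →L[ℂ] H) (x : H) :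
    2 * ‖reOp T x‖ = ‖T x + adjoint T x‖ := by
  rw [reOp, smul_apply, add_apply, norm_smul]
  norm_num
  ring

lemma norm_absRe_apply (T : H →L[ℂ] H) (x : H) : ‖absRe T x‖ = ‖reOp T x‖ := by
  have hB : IsSelfAdjoint (absRe T) := .of_nonneg (CFC.sqrt_nonneg _)
  have hR := isSelfAdjoint_reOp T
  refine norm_apply_eq_of_adjoint_comp_self_eq ?_ x
  rw [← star_eq_adjoint, ← star_eq_adjoint, hB.star_eq, hR.star_eq, ← mul_def, ← mul_def,
    ← sq, ← sq, absRe, CFC.sq_sqrt _ hR.sq_nonneg]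

lemma absOp_apply_eq (T : H →L[ℂ] H) {x : H} (hx : adjoint T (T x) = x) : absOp T x = x := by
  have hTT : 0 ≤ adjoint T * T := star_eq_adjoint T ▸ star_mul_self_nonneg T
  have hA : (absOp T).IsPositive := (nonneg_iff_isPositive _).mp (CFC.sqrt_nonneg _)
  refine hA.apply_eq_of_apply_apply_eq ?_
  have hsq : absOp T * absOp T = adjoint T * T := by rw [← sq, absOp, CFC.sq_sqrt _ hTT]
  rw [← mul_apply_eq_comp, hsq, mul_apply_eq_comp, hx]

variable (hT : ‖T‖ ≤ 1) (h : absOp T ≤ absRe T)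
include hT h

lemma absRe_apply_eq {x : H} (hx : adjoint T (T x) = x) : absRe T x = x := by
  have hle : ‖reOp T x‖ ≤ ‖x‖ := by
    have := norm_add_le (T x) (adjoint T x)
    have := norm_apply_le_of_norm_le_one hT x
    have := norm_apply_le_of_norm_le_one (T := adjoint T) (by simpa using hT) x
    linarith [two_mul_norm_reOp_apply T x]
  refine eq_of_norm_le_of_sq_norm_le_re_inner (𝕜 := ℂ) ((norm_absRe_apply T x).trans_le hle) ?_
  have hpos := ((le_def _ _).mp h).re_inner_nonneg_left x
  rw [sub_apply, inner_sub_left, map_sub, absOp_apply_eq T hx, inner_self_eq_norm_sq] at hpos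
  linarith

lemma adjoint_apply_eq_apply {x : H} (hx : adjoint T (T x) = x) : adjoint T x = T x := by
  have hRx : ‖reOp T x‖ = ‖x‖ := by rw [← norm_absRe_apply, absRe_apply_eq hT h hx]
  refine eq_of_norm_le_of_norm_add_eq ℂ (r := ‖x‖) ?_ ?_ ?_
  · exact norm_apply_le_of_norm_le_one (by simpa using hT) x
  · exact norm_apply_le_of_norm_le_one hT x
  · rw [add_comm, ← two_mul_norm_reOp_apply, hRx]

lemma apply_adjoint_apply_eq {x : H} (hx : adjoint T (T x) = x) : T (adjoint T x) = x := by
  have hnorm : ‖adjoint T x‖ = ‖x‖ := by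
    rw [adjoint_apply_eq_apply hT h hx, norm_apply_eq_of_adjoint_apply_apply_eq T hx]
  simpa using adjoint_apply_apply_eq_of_norm_apply_eq (T := adjoint T) (by simpa using hT) hnorm

lemma apply_apply_eq {x : H} (hx : adjoint T (T x) = x) : T (T x) = x := by
  rw [← adjoint_apply_eq_apply hT h hx, apply_adjoint_apply_eq hT h hx]

lemma adjoint_apply_apply_apply_eq {x : H} (hx : adjoint T (T x) = x) :
    adjoint T (T (T x)) = T x := by
  rw [apply_apply_eq hT h hx, adjoint_apply_eq_apply hT h hx]

lemma ker_one_sub_adjoint_mul_self_eq_ker_one_sub_mul_adjoint :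
    LinearMap.ker ((1 - adjoint T * T : H →L[ℂ] H) : H →ₗ[ℂ] H) =
      LinearMap.ker ((1 - T * adjoint T : H →L[ℂ] H) : H →ₗ[ℂ] H) := by
  ext x
  simp only [mem_ker_one_sub_iff, mul_apply_eq_comp]
  refine ⟨apply_adjoint_apply_eq hT h, fun hx => ?_⟩
  -- `T† x` lies in `N(I - T*T)`, which `T` maps into itself, and `x = T (T† x)`.
  have hy : adjoint T (T (adjoint T x)) = adjoint T x := by
    refine adjoint_apply_apply_eq_of_norm_apply_eq hT ?_
    rw [hx]
    exact (norm_apply_eq_of_adjoint_apply_apply_eq (adjoint T) (by rwa [adjoint_adjoint])).symm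
  simpa only [hx] using adjoint_apply_apply_apply_eq hT h hy

lemma ker_one_sub_adjoint_mul_self_eq_closure_range_pow {m : ℕ}
    (hqi : ∀ x : H, ‖T ((T ^ m) x)‖ = ‖(T ^ m) x‖) :
    LinearMap.ker ((1 - adjoint T * T : H →L[ℂ] H) : H →ₗ[ℂ] H) =
      (LinearMap.range ((T ^ m : H →L[ℂ] H) : H →ₗ[ℂ] H)).topologicalClosure := by
  refine le_antisymm (fun x hx =>
    Submodule.le_topologicalClosure _ (LinearMap.mem_range.mpr ⟨(T ^ m) x, ?_⟩)) ?_
  · rw [mem_ker_one_sub_iff, mul_apply_eq_comp] at hx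
    have hsq : (T ^ 2) x = x := by rw [sq, mul_apply_eq_comp, apply_apply_eq hT h hx]
    rw [coe_coe, ← mul_apply_eq_comp, ← pow_add, ← two_mul, pow_mul,
      FunLike.coe_pow_eq_iterate, Function.iterate_fixed hsq]
  · refine Submodule.topologicalClosure_minimal _ ?_ (isClosed_ker _)
    rintro _ ⟨y, rfl⟩
    rw [coe_coe, mem_ker_one_sub_iff, mul_apply_eq_comp]
    exact adjoint_apply_apply_eq_of_norm_apply_eq hT (hqi y)

lemma orthogonal_ker_one_sub_adjoint_mul_self_mem_invtSubmodule :
    (LinearMap.ker ((1 - adjoint T * T : H →L[ℂ] H) : H →ₗ[ℂ] H))ᗮ ∈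
      Module.End.invtSubmodule (T : H →ₗ[ℂ] H) := by
  refine orthogonal_mem_invtSubmodule ?_
  rw [Module.End.mem_invtSubmodule_iff_forall_mem_of_mem]
  intro x hx
  simp only [coe_coe, mem_ker_one_sub_iff, mul_apply_eq_comp] at hx ⊢
  rw [adjoint_apply_eq_apply hT h hx]
  exact adjoint_apply_apply_apply_eq hT h hx

end AbsReDomination

theorem stmt15_general {H : Type*} [NormedAddCommGroup H] [InnerProductSpace ℂ H] [CompleteSpace H]
    (T : H →L[ℂ] H) (hT : ‖T‖ ≤ 1) (m : ℕ)
    (hqi : ∀ x : H, ‖T ((T ^ m) x)‖ = ‖(T ^ m) x‖)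
    (h : absOp T ≤ absRe T) :
    LinearMap.ker ((1 - adjoint T * T : H →L[ℂ] H) : H →ₗ[ℂ] H) = LinearMap.ker ((1 - T * adjoint T : H →L[ℂ] H) : H →ₗ[ℂ] H) ∧
    LinearMap.ker ((1 - adjoint T * T : H →L[ℂ] H) : H →ₗ[ℂ] H) = (LinearMap.range ((T ^ m : H →L[ℂ] H) : H →ₗ[ℂ] H)).topologicalClosure ∧
    (∀ x ∈ LinearMap.ker ((1 - adjoint T * T : H →L[ℂ] H) : H →ₗ[ℂ] H),
      T x ∈ LinearMap.ker ((1 - adjoint T * T : H →L[ℂ] H) : H →ₗ[ℂ] H) ∧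
      adjoint T x ∈ LinearMap.ker ((1 - adjoint T * T : H →L[ℂ] H) : H →ₗ[ℂ] H) ∧
      adjoint T x = T x ∧ T (T x) = x) ∧
    (∀ x ∈ (LinearMap.ker ((1 - adjoint T * T : H →L[ℂ] H) : H →ₗ[ℂ] H))ᗮ,
      T x ∈ (LinearMap.ker ((1 - adjoint T * T : H →L[ℂ] H) : H →ₗ[ℂ] H))ᗮ ∧ (T ^ m) x = 0) := by
  set K := LinearMap.ker ((1 - adjoint T * T : H →L[ℂ] H) : H →ₗ[ℂ] H)
  have hmem (x : H) : x ∈ K ↔ adjoint T (T x) = x := by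
    rw [mem_ker_one_sub_iff, mul_apply_eq_comp]
  have hperp : Set.MapsTo T Kᗮ Kᗮ := (Module.End.mem_invtSubmodule_iff_mapsTo _).mp
    (orthogonal_ker_one_sub_adjoint_mul_self_mem_invtSubmodule hT h)
  refine ⟨ker_one_sub_adjoint_mul_self_eq_ker_one_sub_mul_adjoint hT h,
    ker_one_sub_adjoint_mul_self_eq_closure_range_pow hT h hqi, fun x hx => ?_,
    fun x hx => ⟨hperp hx, ?_⟩⟩
  · rw [hmem] at hx
    have hTx : T x ∈ K := (hmem _).mpr (adjoint_apply_apply_apply_eq hT h hx)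
    exact ⟨hTx, adjoint_apply_eq_apply hT h hx ▸ hTx, adjoint_apply_eq_apply hT h hx,
      apply_apply_eq hT h hx⟩
  · have hK : (T ^ m) x ∈ K := (hmem _).mpr (adjoint_apply_apply_eq_of_norm_apply_eq hT (hqi x))
    have hKperp : (T ^ m) x ∈ Kᗮ := by
      rw [FunLike.coe_pow_eq_iterate]
      exact hperp.iterate m hx
    simpa using K.inf_orthogonal_eq_bot.le ⟨hK, hKperp⟩

/-- For a contractive `m`-quasi-isometry (`m ≥ 3`) with `|T| ≤ |Re T|`:
`N(I - T*T) = N(I - TT*) = closure(R(T^m))`, this subspace reduces `T` to a symmetry,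
and `T = S ⊕ Q` with `S` a symmetry and `Q^m = 0`. -/
theorem stmt15 {H : Type*} [NormedAddCommGroup H] [InnerProductSpace ℂ H] [CompleteSpace H]
    (T : H →L[ℂ] H) (hT : ‖T‖ ≤ 1) (m : ℕ) (hm : 3 ≤ m)
    (hqi : ∀ x : H, ‖T ((T ^ m) x)‖ = ‖(T ^ m) x‖)
    (h : absOp T ≤ absRe T) :
    LinearMap.ker ((1 - adjoint T * T : H →L[ℂ] H) : H →ₗ[ℂ] H) = LinearMap.ker ((1 - T * adjoint T : H →L[ℂ] H) : H →ₗ[ℂ] H) ∧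
    LinearMap.ker ((1 - adjoint T * T : H →L[ℂ] H) : H →ₗ[ℂ] H) = (LinearMap.range ((T ^ m : H →L[ℂ] H) : H →ₗ[ℂ] H)).topologicalClosure ∧
    (∀ x ∈ LinearMap.ker ((1 - adjoint T * T : H →L[ℂ] H) : H →ₗ[ℂ] H),
      T x ∈ LinearMap.ker ((1 - adjoint T * T : H →L[ℂ] H) : H →ₗ[ℂ] H) ∧
      adjoint T x ∈ LinearMap.ker ((1 - adjoint T * T : H →L[ℂ] H) : H →ₗ[ℂ] H) ∧
      adjoint T x = T x ∧ T (T x) = x) ∧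
    (∀ x ∈ (LinearMap.ker ((1 - adjoint T * T : H →L[ℂ] H) : H →ₗ[ℂ] H))ᗮ,
      T x ∈ (LinearMap.ker ((1 - adjoint T * T : H →L[ℂ] H) : H →ₗ[ℂ] H))ᗮ ∧ (T ^ m) x = 0) :=
  stmt15_general T hT m hqi h
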